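/- arXiv:2205.15113 — 2 statements merged into one kernel-verified Lean document; each statement's English description precedes it below -/
import Mathlib

section
/- For every k ≥ 1, every γ ∈ (0,1], and every h ∈ Δ_k, let q = Π(h/γ) and let m = #{j ∈ {1,…,k} : q_j > 0} be the number of nonzero coordinates of q. Then for every index i ∈ {1,…,k}, it holds that q_i ≥ (m·h_i − 1)/(γ·m) + 1/m. -/
open scoped BigOperators

/-- The probability simplex in `ℝ^k`. -/
def simplex (k : ℕ) : Set (EuclideanSpace ℝ (Fin k)) :=
  {p | (∀ i, 0 ≤ p i) ∧ ∑ i, p i = 1}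

/-- `q` is the Euclidean (L2) metric projection of `x` onto the probability simplex. -/
def IsL2ProjOnSimplex (k : ℕ) (x q : EuclideanSpace ℝ (Fin k)) : Prop :=
  q ∈ simplex k ∧ ∀ r ∈ simplex k, ‖q - x‖ ≤ ‖r - x‖

/-!
The projection `q` of `x` onto the simplex satisfies the variational inequality
`⟪x - q, r - q⟫ ≤ 0` for all `r` in the simplex. Shifting mass from a coordinate `j` with
`q j > 0` to any `i` shows that `x i - q i ≤ x j - q j`, so `x - q` equals a constant `τ` on the
support of `q` and is at most `τ` elsewhere. Summing over the support (of size `m`) gives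
`m τ = ∑_{supp} x - 1 ≤ ∑ x - 1`, hence `q i ≥ x i - (∑ x - 1) / m`. For `x = h / γ` with
`h ∈ Δ_k` this is `q i ≥ h i / γ - (1/γ - 1) / m`, which is the claimed bound rewritten.
-/

open Finset

section

variable {k : ℕ}

lemma convex_simplex : Convex ℝ (simplex k) :=
  (convex_stdSimplex ℝ (Fin k)).linear_preimage (WithLp.linearEquiv 2 ℝ (Fin k → ℝ)).toLinearMap

lemma sum_filter_pos_eq_one {p : EuclideanSpace ℝ (Fin k)} (hp : p ∈ simplex k) :
    ∑ j with 0 < p j, p j = 1 := by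
  rw [sum_filter_of_ne fun j _ hj => (hp.1 j).lt_of_ne' hj, hp.2]

lemma card_filter_pos_pos {p : EuclideanSpace ℝ (Fin k)} (hp : p ∈ simplex k) :
    0 < #{j | 0 < p j} := by
  refine card_pos.2 (nonempty_of_sum_ne_zero (f := fun j => p j) ?_)
  rw [sum_filter_pos_eq_one hp]
  exact one_ne_zero

namespace IsL2ProjOnSimplex

variable {x q : EuclideanSpace ℝ (Fin k)}

lemma inner_sub_le_zero (hq : IsL2ProjOnSimplex k x q) {r : EuclideanSpace ℝ (Fin k)}
    (hr : r ∈ simplex k) : inner ℝ (x - q) (r - q) ≤ 0 := by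
  have : Nonempty (simplex k) := ⟨⟨q, hq.1⟩⟩
  have hmin : ‖x - q‖ = ⨅ w : simplex k, ‖x - w‖ := by
    have hbdd : BddBelow (Set.range fun w : simplex k => ‖x - w‖) :=
      ⟨0, by rintro _ ⟨w, rfl⟩; exact norm_nonneg _⟩
    refine le_antisymm (le_ciInf fun w => ?_) (ciInf_le hbdd ⟨q, hq.1⟩)
    simpa only [norm_sub_rev x] using hq.2 w w.2
  exact (norm_eq_iInf_iff_real_inner_le_zero convex_simplex hq.1).1 hmin r hr

/-- Moving the whole mass `q j` from `j` to `i` stays in the simplex, so the variational inequality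
applies in that direction. -/
lemma sub_le_sub_of_pos (hq : IsL2ProjOnSimplex k x q) (i : Fin k) {j : Fin k} (hj : 0 < q j) :
    x i - q i ≤ x j - q j := by
  set d := EuclideanSpace.single i (q j) - EuclideanSpace.single j (q j)
  have hd : q + d ∈ simplex k := by
    refine ⟨fun l => ?_, ?_⟩
    · have := hq.1.1 l
      simp only [d, PiLp.add_apply, PiLp.sub_apply, PiLp.single_apply]
      split_ifs <;> subst_vars <;> linarith
    · simp [d, sum_add_distrib, hq.1.2]
  have key := hq.inner_sub_le_zero hd
  simp only [d, add_sub_cancel_left, inner_sub_right, EuclideanSpace.inner_single_right,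
    PiLp.sub_apply, Real.ringHom_apply, tsub_le_iff_right, zero_add] at key
  exact le_of_mul_le_mul_left key hj

lemma card_mul_sub_eq (hq : IsL2ProjOnSimplex k x q) {j : Fin k} (hj : 0 < q j) :
    #{l | 0 < q l} * (x j - q j) = ∑ l with 0 < q l, x l - 1 := by
  have hconst : ∀ l ∈ ({l | 0 < q l} : Finset (Fin k)), x l - q l = x j - q j := fun l hl =>
    le_antisymm (hq.sub_le_sub_of_pos l hj) (hq.sub_le_sub_of_pos j (mem_filter.1 hl).2)
  rw [← sum_filter_pos_eq_one hq.1, ← sum_sub_distrib, sum_congr rfl hconst, sum_const,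
    nsmul_eq_mul]

lemma sub_sum_sub_one_div_card_le (hq : IsL2ProjOnSimplex k x q) (hx : ∀ l, 0 ≤ x l)
    (i : Fin k) : x i - (∑ l, x l - 1) / #{l | 0 < q l} ≤ q i := by
  obtain ⟨j, hj⟩ := card_pos.1 (card_filter_pos_pos hq.1)
  have hj : 0 < q j := (mem_filter.1 hj).2
  have hm : (0 : ℝ) < #{l | 0 < q l} := by exact_mod_cast card_filter_pos_pos hq.1
  have hsum : ∑ l with 0 < q l, x l ≤ ∑ l, x l :=
    sum_le_sum_of_subset_of_nonneg (filter_subset _ _) fun l _ _ => hx l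
  calc x i - (∑ l, x l - 1) / #{l | 0 < q l}
      ≤ x i - (∑ l with 0 < q l, x l - 1) / #{l | 0 < q l} := by gcongr
    _ = x i - (x j - q j) := by rw [← hq.card_mul_sub_eq hj, mul_div_cancel_left₀ _ hm.ne']
    _ ≤ q i := by linarith [hq.sub_le_sub_of_pos i hj]

end IsL2ProjOnSimplex

end

theorem stmt_10_general (k : ℕ) (γ : ℝ) (hγ : γ ∈ Set.Ioc (0 : ℝ) 1)
    (h : EuclideanSpace ℝ (Fin k)) (hh : h ∈ simplex k)
    (q : EuclideanSpace ℝ (Fin k)) (hq : IsL2ProjOnSimplex k (γ⁻¹ • h) q)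
    (m : ℕ) (hm : m = (Finset.univ.filter fun j => 0 < q j).card) :
    ∀ i, q i ≥ ((m : ℝ) * h i - 1) / (γ * (m : ℝ)) + 1 / (m : ℝ) := by
  intro i
  have hγ0 : γ ≠ 0 := hγ.1.ne'
  have hm0 : (m : ℝ) ≠ 0 := by rw [hm]; exact_mod_cast (card_filter_pos_pos hq.1).ne'
  have hx : ∀ l, 0 ≤ (γ⁻¹ • h) l := fun l => mul_nonneg (inv_nonneg.2 hγ.1.le) (hh.1 l)
  have hbound := hq.sub_sum_sub_one_div_card_le hx i
  simp only [PiLp.smul_apply, smul_eq_mul, ← mul_sum, hh.2, mul_one, ← hm] at hbound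
  rw [ge_iff_le]
  convert hbound using 1
  field_simp
  ring

/-- for `γ ∈ (0,1]`, `h ∈ Δ_k`, `q = Π(h/γ)` and `m` the number of nonzero
coordinates of `q`: every index `i` satisfies `q i ≥ (m·h i − 1)/(γ·m) + 1/m`. -/
theorem stmt_10 (k : ℕ) (hk : 1 ≤ k) (γ : ℝ) (hγ : γ ∈ Set.Ioc (0 : ℝ) 1)
    (h : EuclideanSpace ℝ (Fin k)) (hh : h ∈ simplex k)
    (q : EuclideanSpace ℝ (Fin k)) (hq : IsL2ProjOnSimplex k (γ⁻¹ • h) q)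
    (m : ℕ) (hm : m = (Finset.univ.filter fun j => 0 < q j).card) :
    ∀ i, q i ≥ ((m : ℝ) * h i - 1) / (γ * (m : ℝ)) + 1 / (m : ℝ) :=
  stmt_10_general k γ hγ h hh q hq m hm
end

section
/- For every k ≥ 2, every γ ∈ (0,1], and every h ∈ Δ_k: if Π(h/γ) = e_j for some index j ∈ {1,…,k}, then there exists an index i ≠ j such that (2h_i − 1)/γ + 1 ≤ 0. -/
open scoped BigOperators

lemma simplex_convex (k : ℕ) : Convex ℝ (simplex k) := by
  intro a ha b hb s t hs ht hst
  refine ⟨fun i => ?_, ?_⟩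
  · have := ha.1 i
    have := hb.1 i
    simp only [PiLp.add_apply, PiLp.smul_apply, smul_eq_mul]
    positivity
  · simp only [PiLp.add_apply, PiLp.smul_apply, smul_eq_mul]
    rw [Finset.sum_add_distrib, ← Finset.mul_sum, ← Finset.mul_sum, ha.2, hb.2]
    linarith

/-- for `k ≥ 2`, `γ ∈ (0,1]`, `h ∈ Δ_k`: if `Π(h/γ) = e_j` for some `j`,
then there exists an index `i ≠ j` with `(2h_i − 1)/γ + 1 ≤ 0`. -/
theorem stmt_13 (k : ℕ) (hk : 2 ≤ k) (γ : ℝ) (hγ : γ ∈ Set.Ioc (0 : ℝ) 1)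
    (h : EuclideanSpace ℝ (Fin k)) (hh : h ∈ simplex k) (j : Fin k)
    (hq : IsL2ProjOnSimplex k (γ⁻¹ • h) (EuclideanSpace.single j (1 : ℝ))) :
    ∃ i, i ≠ j ∧ (2 * h i - 1) / γ + 1 ≤ 0 := by
  obtain ⟨hγ0, hγ1⟩ := hγ
  set x : EuclideanSpace ℝ (Fin k) := γ⁻¹ • h with hx
  set q : EuclideanSpace ℝ (Fin k) := EuclideanSpace.single j (1 : ℝ) with hqdef
  -- pick i ≠ j
  have hk1 : 1 < k := by omega
  have : Nontrivial (Fin k) := Fin.nontrivial_iff_two_le.mpr hk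
  obtain ⟨i, hij⟩ := exists_ne j
  -- variational inequality
  haveI : Nonempty (simplex k) := ⟨⟨q, hq.1⟩⟩
  have hinf : ‖x - q‖ = ⨅ w : (simplex k), ‖x - w‖ := by
    refine le_antisymm ?_ ?_
    · refine le_ciInf fun w => ?_
      have := hq.2 w w.2
      rwa [norm_sub_rev q x, norm_sub_rev (w : EuclideanSpace ℝ (Fin k)) x] at this
    · exact ciInf_le ⟨0, fun _ ⟨_, hb⟩ => hb ▸ norm_nonneg _⟩ (⟨q, hq.1⟩ : simplex k)
  have key := (norm_eq_iInf_iff_real_inner_le_zero (simplex_convex k) hq.1).mp hinf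
  -- the test point
  set z : EuclideanSpace ℝ (Fin k) :=
    (2⁻¹ : ℝ) • (EuclideanSpace.single j (1 : ℝ) + EuclideanSpace.single i (1 : ℝ)) with hz
  have hzmem : z ∈ simplex k := by
    constructor
    · intro t
      simp only [hz, PiLp.smul_apply, PiLp.add_apply, smul_eq_mul,
        EuclideanSpace.single_apply]
      positivity
    · simp only [hz, PiLp.smul_apply, PiLp.add_apply, smul_eq_mul,
        EuclideanSpace.single_apply]
      rw [← Finset.mul_sum, Finset.sum_add_distrib]
      simp [Finset.sum_ite_eq' Finset.univ j (fun _ => (1:ℝ)),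
        Finset.sum_ite_eq' Finset.univ i (fun _ => (1:ℝ))]
      norm_num
  have hkey := key z hzmem
  have hzq : z - q = (2⁻¹ : ℝ) • (EuclideanSpace.single i (1 : ℝ)
      - EuclideanSpace.single j (1 : ℝ)) := by
    rw [hz, hqdef]
    module
  rw [hzq, real_inner_smul_right, inner_sub_right,
    EuclideanSpace.inner_single_right, EuclideanSpace.inner_single_right] at hkey
  simp only [RCLike.star_def, conj_trivial, one_mul] at hkey
  have hxi : (x - q) i = γ⁻¹ * h i := by
    simp [hx, hqdef, PiLp.sub_apply, PiLp.smul_apply, EuclideanSpace.single_apply,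
      if_neg hij]
  have hxj : (x - q) j = γ⁻¹ * h j - 1 := by
    simp [hx, hqdef, PiLp.sub_apply, PiLp.smul_apply, EuclideanSpace.single_apply]
  rw [hxi, hxj] at hkey
  -- so γ⁻¹ h i - (γ⁻¹ h j - 1) ≤ 0, i.e. h i ≤ h j - γ
  have hle : h i + γ ≤ h j := by
    have h2 : γ⁻¹ * h i - (γ⁻¹ * h j - 1) ≤ 0 := by nlinarith
    have := mul_le_mul_of_nonneg_left h2 (le_of_lt hγ0)
    rw [mul_sub, mul_sub, ← mul_assoc, ← mul_assoc, mul_inv_cancel₀ (ne_of_gt hγ0)] at this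
    linarith
  -- h i + h j ≤ 1
  have hsum : h i + h j ≤ 1 := by
    have hsub : ({i, j} : Finset (Fin k)) ⊆ Finset.univ := Finset.subset_univ _
    have := Finset.sum_le_sum_of_subset_of_nonneg hsub
      (fun t _ _ => hh.1 t)
    rw [Finset.sum_pair hij, hh.2] at this
    exact this
  refine ⟨i, hij, ?_⟩
  rw [div_add' _ _ _ (ne_of_gt hγ0), div_nonpos_iff]
  right
  constructor <;> linarith
end
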